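/- arXiv:1407.7007 — 2 statements merged into one kernel-verified Lean document; each statement's English description precedes it below -/
import Mathlib

section
/- Let A = {d_1, …, d_n} be a generalized arithmetic sequence of positive integers with n ≥ 4, gcd(d_1, …, d_n) = 1, and such that A minimally generates the numerical semigroup ℕd_1 + … + ℕd_n. Then the toric ideal I_A is not a complete intersection. -/
open MvPolynomial

/-- The `(p,q)`-Fibonacci sequence: `F 0 = 0`, `F 1 = 1`, `F (n+2) = p * F (n+1) + q * F n`. -/
def pqFib (p q : ℕ) : ℕ → ℕ
  | 0 => 0
  | 1 => 1
  | n + 2 => p * pqFib p q (n + 1) + q * pqFib p q n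

/-- The `(p,q)`-Lucas sequence: `L 0 = 2`, `L 1 = p`, `L (n+2) = p * L (n+1) + q * L n`. -/
def pqLucas (p q : ℕ) : ℕ → ℕ
  | 0 => 2
  | 1 => p
  | n + 2 => p * pqLucas p q (n + 1) + q * pqLucas p q n

/-- The toric ideal of the affine monomial curve `t ↦ (t^{d 0}, …, t^{d (n-1)})`:
the kernel of the `k`-algebra map `k[x_1,…,x_n] → k[t]`, `x_i ↦ t^{d i}`. -/
noncomputable def toricIdeal (k : Type*) [Field k] {n : ℕ} (d : Fin n → ℕ) :
    Ideal (MvPolynomial (Fin n) k) :=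
  RingHom.ker (MvPolynomial.aeval
    (fun i : Fin n => (Polynomial.X : Polynomial k) ^ d i)).toRingHom

/-- The toric ideal `I_A` is a complete intersection iff it can be generated by
`n - 1` elements. -/
def IsCI (k : Type*) [Field k] {n : ℕ} (d : Fin n → ℕ) : Prop :=
  ∃ g : Fin (n - 1) → MvPolynomial (Fin n) k,
    Ideal.span (Set.range g) = toricIdeal k d

/-- The toric ideal of the projective monomial curve: the kernel of the `k`-algebra map
`k[x_1,…,x_{n+1}] → k[t,u]`, `x_i ↦ t^{d i} u^{D - d i}` for `i ≤ n` and
`x_{n+1} ↦ u^D`, where `D = max A`. -/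
noncomputable def projToricIdeal (k : Type*) [Field k] {n : ℕ} (d : Fin n → ℕ) :
    Ideal (MvPolynomial (Fin (n + 1)) k) :=
  RingHom.ker (MvPolynomial.aeval (fun i : Fin (n + 1) =>
    if h : (i : ℕ) < n then
      (X 0 : MvPolynomial (Fin 2) k) ^ d ⟨i, h⟩ *
        (X 1 : MvPolynomial (Fin 2) k) ^ (Finset.univ.sup d - d ⟨i, h⟩)
    else (X 1 : MvPolynomial (Fin 2) k) ^ (Finset.univ.sup d))).toRingHom

/-- The projective toric ideal `I_{A*}` is a complete intersection iff it can be
generated by `n - 1` elements. -/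
def ProjIsCI (k : Type*) [Field k] {n : ℕ} (d : Fin n → ℕ) : Prop :=
  ∃ g : Fin (n - 1) → MvPolynomial (Fin (n + 1)) k,
    Ideal.span (Set.range g) = projToricIdeal k d

/-- `d 0 < d 1 < ⋯` is a generalized arithmetic sequence: there are positive
integers `h, e` with `d i = h * d 0 + i * e` for every `i ≥ 1`. -/
def IsGenArith {n : ℕ} (d : Fin n → ℕ) : Prop :=
  ∃ h e : ℕ, 0 < h ∧ 0 < e ∧
    ∀ i : Fin n, 0 < (i : ℕ) → d i = h * d ⟨0, i.pos⟩ + (i : ℕ) * e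

/-- `d 0 < d 1 < ⋯` is an increasing arithmetic sequence: there is a positive
integer `e` with `d i = d 0 + i * e` for every `i`. -/
def IsArithFn {n : ℕ} (d : Fin n → ℕ) : Prop :=
  ∃ e : ℕ, 0 < e ∧ ∀ i : Fin n, 0 < (i : ℕ) → d i = d ⟨0, i.pos⟩ + (i : ℕ) * e

/-- `A = {d 0, …, d (n-1)}` minimally generates the numerical semigroup
`ℕ d 0 + ⋯ + ℕ d (n-1)`: no `d i` lies in the subsemigroup generated by the rest. -/
def MinimallyGenerates {n : ℕ} (d : Fin n → ℕ) : Prop :=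
  ∀ i : Fin n, ¬ ∃ α : Fin n → ℕ, α i = 0 ∧ d i = ∑ j, α j * d j

/-! Index the variables from `0` and write `d = (a, h a + e, …, h a + N e)` with `N = n - 1`.
Minimality forces `N < a` and `gcd(d) = 1` forces `gcd(a, e) = 1`; then
`x a + y e = x' a + y' e` with `y, y' < a` forces `x = x'` and `y = y'`, which pins down the few
monomials of small weight.

If every proper divisor of `x^α` is the only monomial of its weight, then the coefficient of
`x^α` satisfies `coeff α (q p) = q(0) · coeff α p` on `I_A`: each other term of the product
involves the coefficient of a monomial alone in its weight, and such coefficients vanish on the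
kernel of `x_i ↦ t^{d_i}`. The `n` binomials `x_2^2 - x_1 x_3`, `x_N^c - x^p` (`c = ⌈a / N⌉`) and
`x_0^h x_m - x_1 x_{m-1}` (`2 ≤ m ≤ N`) have distinct leading exponents of this kind, none of which
is a trailing exponent, so these coefficients form a family dual to the binomials. Hence every
generating set of `I_A` has at least `n` elements. -/

open Finsupp

theorem card_le_of_span_range_eq {R k ι : Type*} [CommRing R] [Field k] [Fintype ι]
    [DecidableEq ι] {I : Ideal R} (ε : R → k) (φ : ι → R →+ k)
    (hφ : ∀ t q, ∀ p ∈ I, φ t (q * p) = ε q * φ t p) (b : ι → R) (hb : ∀ t, b t ∈ I)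
    (hφb : ∀ t t', φ t (b t') = if t = t' then 1 else 0) {r : ℕ} (g : Fin r → R)
    (hg : Ideal.span (Set.range g) = I) : Fintype.card ι ≤ r := by
  have hgI : ∀ j, g j ∈ I := fun j => hg ▸ Ideal.subset_span ⟨j, rfl⟩
  choose c hc using fun t => Ideal.mem_span_range_iff_exists_fun.mp (hg ▸ hb t)
  let A : Matrix ι (Fin r) k := fun t j => φ t (g j)
  let B : Matrix (Fin r) ι k := fun j t' => ε (c t' j)
  have hAB : A * B = 1 := by
    ext t t'
    rw [Matrix.mul_apply, Matrix.one_apply, ← hφb, ← hc, map_sum]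
    exact Finset.sum_congr rfl fun j _ => by rw [hφ t _ _ (hgI j), mul_comm]
  calc Fintype.card ι = (A * B).rank := by rw [hAB, Matrix.rank_one]
    _ ≤ A.rank := Matrix.rank_mul_le_left A B
    _ ≤ r := (Matrix.rank_le_card_width A).trans_eq (Fintype.card_fin r)

theorem le_of_mul_add_mul_eq {a e x y x' y' : ℕ} (hae : a.Coprime e)
    (h : x * a + y * e = x' * a + y' * e) (hy : y' < y + a) : x ≤ x' := by
  by_contra! hlt
  have hz : (x : ℤ) * a + y * e = x' * a + y' * e := by exact_mod_cast h
  obtain ⟨c, hc⟩ : (a : ℤ) ∣ y' - y :=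
    (Nat.isCoprime_iff_coprime.mpr hae).dvd_of_dvd_mul_right ⟨x - x', by linear_combination -hz⟩
  have hlt' : (x' : ℤ) < x := by exact_mod_cast hlt
  have hy' : (y' : ℤ) < y + a := by exact_mod_cast hy
  rcases Nat.eq_zero_or_pos a with ha | ha
  · subst ha
    simp at hc
    omega
  · have ha' : (0 : ℤ) < a := by exact_mod_cast ha
    have hxe : (x : ℤ) - x' = c * e := by
      have : (a : ℤ) * ((x - x') - c * e) = 0 := by linear_combination hz + e * hc
      exact sub_eq_zero.mp ((mul_eq_zero.mp this).resolve_left ha'.ne')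
    have hc1 : 1 ≤ c := by
      by_contra! hc0
      have : c * (e : ℤ) ≤ 0 := mul_nonpos_of_nonpos_of_nonneg (by omega) (by positivity)
      linarith
    nlinarith

theorem eq_of_mul_add_mul_eq {a e x y x' y' : ℕ} (hae : a.Coprime e) (he : 0 < e)
    (h : x * a + y * e = x' * a + y' * e) (hy : y < a) (hy' : y' < a) : x = x' ∧ y = y' := by
  have hxx : x = x' := le_antisymm (le_of_mul_add_mul_eq hae h (by omega))
    (le_of_mul_add_mul_eq hae h.symm (by omega))
  subst hxx
  exact ⟨rfl, Nat.eq_of_mul_eq_mul_right he (by omega)⟩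

section Exponents

theorem eq_single_add_single_of_le {σ : Type*} {γ : σ →₀ ℕ} {i j : σ} {c c' : ℕ} (hij : i ≠ j)
    (h : γ ≤ single i c + single j c') : γ = single i (γ i) + single j (γ j) := by
  classical
  ext l
  have hl := h l
  by_cases hli : l = i
  · subst hli; simp [hij]
  · by_cases hlj : l = j
    · subst hlj; simp [Ne.symm hij]
    · simp [Ne.symm hli, Ne.symm hlj] at hl ⊢; omega

theorem exists_eq_single_of_lt_single {σ : Type*} {γ : σ →₀ ℕ} {i : σ} {c : ℕ}
    (h : γ < single i c) : ∃ c' < c, γ = single i c' := by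
  have hγ : γ = single i (γ i) :=
    eq_single_iff.mpr ⟨(support_mono h.le).trans support_single_subset, rfl⟩
  refine ⟨γ i, lt_of_le_of_ne (by simpa using h.le i) fun hc => h.ne ?_, hγ⟩
  rw [hγ, hc]

variable {N : ℕ}

theorem degree_le_weight_val {τ : Fin (N + 1) →₀ ℕ} (hτ : τ 0 = 0) :
    degree τ ≤ weight Fin.val τ := by
  rw [degree_eq_sum, weight_eq_sum]
  refine Finset.sum_le_sum fun i _ => ?_
  rcases Fin.eq_zero_or_eq_succ i with rfl | ⟨j, rfl⟩
  · simp [hτ]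
  · exact Nat.le_mul_of_pos_right _ (Nat.succ_pos _)

theorem weight_val_le (τ : Fin (N + 1) →₀ ℕ) : weight Fin.val τ ≤ N * degree τ := by
  rw [degree_eq_sum, weight_eq_sum, Finset.mul_sum]
  exact Finset.sum_le_sum fun i _ => by
    rw [smul_eq_mul, mul_comm N]
    exact Nat.mul_le_mul_left _ (Nat.le_of_lt_succ i.isLt)

theorem eq_single_last_of_weight_val_eq {τ : Fin (N + 1) →₀ ℕ}
    (h : weight Fin.val τ = N * degree τ) : τ = single (Fin.last N) (degree τ) := by
  have hzero : ∀ i ≠ Fin.last N, τ i = 0 := by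
    intro i hi
    by_contra hτi
    have hlt : weight Fin.val τ < N * degree τ := by
      rw [degree_eq_sum, weight_eq_sum, Finset.mul_sum]
      refine Finset.sum_lt_sum (fun j _ => ?_) ⟨i, Finset.mem_univ _, ?_⟩ <;>
        rw [smul_eq_mul, mul_comm N]
      · exact Nat.mul_le_mul_left _ (Nat.le_of_lt_succ j.isLt)
      · exact Nat.mul_lt_mul_of_pos_left (Fin.val_lt_last hi) (Nat.pos_of_ne_zero hτi)
    omega
  have hdeg : degree τ = τ (Fin.last N) := by
    rw [degree_eq_sum]
    exact Finset.sum_eq_single _ (fun i _ hi => hzero i hi) (by simp)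
  ext i
  rw [hdeg, single_apply]
  split_ifs with hi
  · rw [hi]
  · exact hzero i (Ne.symm hi)

end Exponents

section ToricIdeal

variable {k : Type*} [Field k] {n : ℕ} (d : Fin n → ℕ)

def UniqueOfWeight (β : Fin n →₀ ℕ) : Prop :=
  ∀ γ, weight d γ = weight d β → γ = β

theorem aeval_monomial_eq_monomial_weight (β : Fin n →₀ ℕ) (c : k) :
    aeval (fun i => (Polynomial.X : Polynomial k) ^ d i) (monomial β c) =
      Polynomial.monomial (weight d β) c := by
  rw [aeval_monomial, Finsupp.prod, weight_apply, Finsupp.sum,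
    ← Polynomial.C_mul_X_pow_eq_monomial]
  simp_rw [← pow_mul, Finset.prod_pow_eq_pow_sum, smul_eq_mul, mul_comm]
  rfl

theorem monomial_sub_monomial_mem_toricIdeal {α β : Fin n →₀ ℕ}
    (h : weight d α = weight d β) : monomial α (1 : k) - monomial β 1 ∈ toricIdeal k d := by
  simp [toricIdeal, RingHom.mem_ker, aeval_monomial_eq_monomial_weight, h]

variable {d}

theorem coeff_eq_zero_of_mem_toricIdeal {β : Fin n →₀ ℕ} (hβ : UniqueOfWeight d β)
    {p : MvPolynomial (Fin n) k} (hp : p ∈ toricIdeal k d) : coeff β p = 0 := by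
  have key : ∀ q : MvPolynomial (Fin n) k,
      (aeval (fun i => (Polynomial.X : Polynomial k) ^ d i) q).coeff (weight d β) =
        coeff β q := by
    intro q
    induction q using MvPolynomial.induction_on' with
    | monomial γ c =>
      rw [aeval_monomial_eq_monomial_weight, Polynomial.coeff_monomial, coeff_monomial]
      exact if_congr ⟨hβ γ, fun h => h ▸ rfl⟩ rfl rfl
    | add q₁ q₂ h₁ h₂ => rw [map_add, Polynomial.coeff_add, h₁, h₂, coeff_add]
  have hp' : aeval (fun i => (Polynomial.X : Polynomial k) ^ d i) p = 0 := hp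
  rw [← key, hp', Polynomial.coeff_zero]

theorem coeff_mul_of_mem_toricIdeal {α : Fin n →₀ ℕ} (hα : ∀ γ < α, UniqueOfWeight d γ)
    (q : MvPolynomial (Fin n) k) {p : MvPolynomial (Fin n) k} (hp : p ∈ toricIdeal k d) :
    coeff α (q * p) = constantCoeff q * coeff α p := by
  classical
  rw [coeff_mul, Finset.sum_eq_single (0, α), constantCoeff_eq]
  · rintro ⟨u, v⟩ huv hne
    rw [Finset.HasAntidiagonal.mem_antidiagonal] at huv
    have hv : v < α := by
      refine lt_of_le_of_ne (huv ▸ le_add_self) fun hvα => hne ?_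
      have hu : u = 0 := by rw [← huv] at hvα; simpa using hvα
      rw [hu, hvα]
    rw [coeff_eq_zero_of_mem_toricIdeal (hα v hv) hp, mul_zero]
  · simp

theorem card_le_of_binomials {ι : Type*} [Fintype ι] (α β : ι → Fin n →₀ ℕ)
    (hw : ∀ t, weight d (α t) = weight d (β t)) (hα : ∀ t, ∀ γ < α t, UniqueOfWeight d γ)
    (hinj : Function.Injective α) (hne : ∀ t t', α t ≠ β t') {r : ℕ}
    (g : Fin r → MvPolynomial (Fin n) k) (hg : Ideal.span (Set.range g) = toricIdeal k d) :
    Fintype.card ι ≤ r := by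
  classical
  exact card_le_of_span_range_eq constantCoeff (fun t => coeffAddMonoidHom (α t))
    (fun t q _ hp => coeff_mul_of_mem_toricIdeal (hα t) q hp)
    (fun t => monomial (α t) 1 - monomial (β t) 1)
    (fun t => monomial_sub_monomial_mem_toricIdeal d (hw t))
    (fun t t' => by simp [coeff_monomial, hinj.eq_iff, hne t t', eq_comm]) g hg

end ToricIdeal

def genArithSeq (n a h e : ℕ) : Fin n → ℕ := fun i => if (i : ℕ) = 0 then a else h * a + i * e

section GenArithSeq

variable {N a h e : ℕ}

theorem IsGenArith.exists_eq_genArithSeq {d : Fin (N + 1) → ℕ} (hd : IsGenArith d) :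
    ∃ a h e, 0 < h ∧ 0 < e ∧ d = genArithSeq (N + 1) a h e := by
  obtain ⟨h, e, hh, he, hd⟩ := hd
  refine ⟨d 0, h, e, hh, he, funext fun i => ?_⟩
  unfold genArithSeq
  split_ifs with hi
  · rw [show i = 0 from Fin.ext hi]
  · exact hd i (Nat.pos_of_ne_zero hi)

theorem coprime_of_gcd_genArithSeq_eq_one
    (hgcd : Finset.univ.gcd (genArithSeq (N + 1) a h e) = 1) : a.Coprime e :=
  Nat.dvd_one.mp <| hgcd ▸ Finset.dvd_gcd fun i _ => by
    unfold genArithSeq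
    split_ifs
    · exact Nat.gcd_dvd_left a e
    · exact dvd_add (dvd_mul_of_dvd_right (Nat.gcd_dvd_left a e) h)
        (dvd_mul_of_dvd_right (Nat.gcd_dvd_right a e) _)

theorem lt_of_minimallyGenerates_genArithSeq
    (hmin : MinimallyGenerates (genArithSeq (N + 1) a h e)) : N < a := by
  by_contra! haN
  rcases Nat.eq_zero_or_pos a with rfl | ha
  · exact hmin 0 ⟨0, rfl, by simp [genArithSeq]⟩
  · refine hmin ⟨a, by omega⟩ ⟨Pi.single 0 (h + e), by simp [Fin.ext_iff, ha.ne'], ?_⟩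
    rw [Fintype.sum_eq_single 0 fun j hj => by simp [hj]]
    simp [genArithSeq, ha.ne']
    ring

theorem weight_genArithSeq (γ : Fin (N + 1) →₀ ℕ) :
    weight (genArithSeq (N + 1) a h e) γ =
      (γ 0 + h * degree (γ.erase 0)) * a + weight Fin.val (γ.erase 0) * e := by
  have hterm : ∀ i, (γ.erase 0) i * genArithSeq (N + 1) a h e i =
      (γ.erase 0) i * (h * a) + (γ.erase 0) i * i * e := by
    intro i
    rcases Fin.eq_zero_or_eq_succ i with rfl | ⟨j, rfl⟩
    · simp
    · simp only [genArithSeq, Fin.val_succ, Nat.succ_ne_zero, if_false]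
      ring
  conv_lhs => rw [← single_add_erase 0 γ]
  rw [map_add, weight_single, weight_eq_sum, degree_eq_sum, weight_eq_sum Fin.val]
  simp only [smul_eq_mul, hterm, Finset.sum_add_distrib, ← Finset.sum_mul]
  simp only [genArithSeq, Fin.val_zero, if_true]
  ring

theorem eq_of_weight_genArithSeq_eq (hae : a.Coprime e) (he : 0 < e) {γ : Fin (N + 1) →₀ ℕ}
    {x y b : ℕ} (hγ : weight (genArithSeq (N + 1) a h e) γ = x * a + y * e) (hy : y < a)
    (hx : x < h * (b + 1)) (hb : N * b < a) :
    γ 0 + h * degree (γ.erase 0) = x ∧ weight Fin.val (γ.erase 0) = y := by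
  rw [weight_genArithSeq] at hγ
  have hle := le_of_mul_add_mul_eq hae hγ (by omega)
  have hB : degree (γ.erase 0) ≤ b :=
    Nat.le_of_lt_succ (Nat.lt_of_mul_lt_mul_left (lt_of_le_of_lt (by omega) hx))
  have hF : weight Fin.val (γ.erase 0) < a :=
    (weight_val_le _).trans_lt ((Nat.mul_le_mul_left N hB).trans_lt hb)
  exact eq_of_mul_add_mul_eq hae he hγ hF hy

theorem uniqueOfWeight_single_zero (hae : a.Coprime e) (he : 0 < e) (hh : 0 < h)
    (hNa : N < a) {j : ℕ} (hj : j ≤ h) :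
    UniqueOfWeight (genArithSeq (N + 1) a h e) (single 0 j) := by
  intro γ hγ
  obtain ⟨hx, hy⟩ := eq_of_weight_genArithSeq_eq (x := j) (y := 0) (b := 1) hae he
    (by rw [hγ, weight_single]; simp [genArithSeq]) (by omega) (by omega) (by omega)
  have hτ : γ.erase 0 = 0 :=
    (degree_eq_zero_iff _).mp <| Nat.eq_zero_of_le_zero <|
      (degree_le_weight_val erase_same).trans_eq hy
  have h0 : γ 0 = j := by simpa [hτ] using hx
  rw [← single_add_erase 0 γ, hτ, h0, add_zero]

theorem uniqueOfWeight_single_zero_add_single (hae : a.Coprime e) (he : 0 < e) (hNa : N < a)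
    {j : ℕ} (hj : j < h) {t : Fin (N + 1)} (ht : t ≠ 0) :
    UniqueOfWeight (genArithSeq (N + 1) a h e) (single 0 j + single t 1) := by
  intro γ hγ
  obtain ⟨hx, hy⟩ := eq_of_weight_genArithSeq_eq (x := j + h) (y := t) (b := 1) hae he
    (by
      rw [hγ, map_add, weight_single, weight_single]
      simp [genArithSeq, Fin.val_ne_zero_iff.mpr ht]
      ring)
    (by omega) (by omega) (by omega)
  have hdeg : degree (γ.erase 0) = 1 := by
    have hpos : 0 < degree (γ.erase 0) := Nat.pos_of_ne_zero fun h0 => ht <| Fin.ext <| by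
      simpa [h0, hy] using weight_val_le (γ.erase 0)
    have hlt : degree (γ.erase 0) < 2 := Nat.lt_of_mul_lt_mul_left (a := h) (by omega)
    omega
  obtain ⟨i, hi⟩ := (sum_eq_one_iff _).mp hdeg
  have hit : i = t := Fin.ext (by simpa [hi, weight_single] using hy)
  have h0 : γ 0 = j := by rw [hdeg] at hx; omega
  rw [← single_add_erase 0 γ, hi, hit, h0]

theorem uniqueOfWeight_single_last (hae : a.Coprime e) (he : 0 < e) (hh : 0 < h)
    (hN : 0 < N) {c : ℕ} (hc : N * c < a) :
    UniqueOfWeight (genArithSeq (N + 1) a h e) (single (Fin.last N) c) := by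
  intro γ hγ
  obtain ⟨hx, hy⟩ := eq_of_weight_genArithSeq_eq (x := h * c) (y := N * c) (b := c) hae he
    (by rw [hγ, weight_single]; simp [genArithSeq, hN.ne']; ring)
    (by omega) (by nlinarith) hc
  have hB : degree (γ.erase 0) = c := by
    have hge : c ≤ degree (γ.erase 0) := Nat.le_of_mul_le_mul_left (hy ▸ weight_val_le _) hN
    have hle : degree (γ.erase 0) ≤ c := Nat.le_of_mul_le_mul_left (c := h) (by omega) hh
    omega
  have h0 : γ 0 = 0 := by rw [hB] at hx; omega
  rw [← single_add_erase 0 γ, eq_single_last_of_weight_val_eq (τ := γ.erase 0) (by rw [hy, hB]),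
    hB, h0, single_zero, zero_add]

theorem uniqueOfWeight_of_lt_single_zero_add_single (hae : a.Coprime e) (he : 0 < e)
    (hh : 0 < h) (hNa : N < a) {t : Fin (N + 1)} (ht : t ≠ 0) :
    ∀ γ < single 0 h + single t 1, UniqueOfWeight (genArithSeq (N + 1) a h e) γ := by
  intro γ hγ
  have hγ' := eq_single_add_single_of_le (Ne.symm ht) hγ.le
  have h0 : γ 0 ≤ h := by simpa [Ne.symm ht] using hγ.le 0
  have ht1 : γ t ≤ 1 := by simpa [ht] using hγ.le t
  rcases Nat.le_one_iff_eq_zero_or_eq_one.mp ht1 with ht0 | ht1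
  · rw [hγ', ht0, single_zero, add_zero]
    exact uniqueOfWeight_single_zero hae he hh hNa h0
  · have hlt : γ 0 < h := lt_of_le_of_ne h0 fun h0 => hγ.ne (by rw [hγ', h0, ht1])
    rw [hγ', ht1]
    exact uniqueOfWeight_single_zero_add_single hae he hNa hlt ht

theorem uniqueOfWeight_of_lt_single_two (hae : a.Coprime e) (he : 0 < e)
    (hh : 0 < h) (hNa : N < a) {t : Fin (N + 1)} (ht : t ≠ 0) :
    ∀ γ < single t 2, UniqueOfWeight (genArithSeq (N + 1) a h e) γ := by
  intro γ hγ
  obtain ⟨c, hc, rfl⟩ := exists_eq_single_of_lt_single hγ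
  interval_cases c
  · simpa using uniqueOfWeight_single_zero hae he hh hNa (Nat.zero_le h)
  · simpa using uniqueOfWeight_single_zero_add_single hae he hNa hh ht

theorem uniqueOfWeight_of_lt_single_last (hae : a.Coprime e) (he : 0 < e) (hh : 0 < h)
    (hN : 0 < N) {c : ℕ} (hc : N * (c - 1) < a) :
    ∀ γ < single (Fin.last N) c, UniqueOfWeight (genArithSeq (N + 1) a h e) γ := by
  intro γ hγ
  obtain ⟨c', hc', rfl⟩ := exists_eq_single_of_lt_single hγ
  exact uniqueOfWeight_single_last hae he hh hN
    ((Nat.mul_le_mul_left N (Nat.le_sub_one_of_lt hc')).trans_lt hc)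

theorem exists_weight_eq_weight_single_last (he : 0 < e) (hN : 0 < N)
    (hNa : N < a) : ∃ c p, N * (c - 1) < a ∧
      weight (genArithSeq (N + 1) a h e) p =
        weight (genArithSeq (N + 1) a h e) (single (Fin.last N) c) ∧ h < p 0 := by
  obtain ⟨q, r, hr, rfl⟩ : ∃ q r, r < N ∧ a = N * q + r :=
    ⟨a / N, a % N, Nat.mod_lt _ hN, (Nat.div_add_mod a N).symm⟩
  obtain ⟨q, rfl⟩ := Nat.exists_eq_add_one_of_ne_zero (by rintro rfl; omega : q ≠ 0)
  rcases Nat.eq_zero_or_pos r with rfl | hr0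
  · refine ⟨q + 1, single 0 (h * (q + 1) + e), ?_, ?_, ?_⟩
    · simp; nlinarith
    · rw [weight_single, weight_single]
      simp [genArithSeq, hN.ne']
      ring
    · simp; nlinarith
  · refine ⟨q + 2, single 0 (h * (q + 1) + e) + single ⟨N - r, by omega⟩ 1, ?_, ?_, ?_⟩
    · simp; omega
    · rw [map_add, weight_single, weight_single, weight_single]
      simp [genArithSeq, hN.ne', show N - r ≠ 0 by omega]
      zify [hr.le]
      ring
    · simp [Fin.ext_iff, show N - r ≠ 0 by omega]; nlinarith

end GenArithSeq

section Family

variable {M : ℕ}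

noncomputable def leadExp (h c : ℕ) : Fin (M + 4) → Fin (M + 4) →₀ ℕ
  | ⟨0, _⟩ => single ⟨2, by omega⟩ 2
  | ⟨1, _⟩ => single (Fin.last (M + 3)) c
  | ⟨m + 2, hm⟩ => single 0 h + single ⟨m + 2, hm⟩ 1

noncomputable def trailExp (p : Fin (M + 4) →₀ ℕ) : Fin (M + 4) → Fin (M + 4) →₀ ℕ
  | ⟨0, _⟩ => single ⟨1, by omega⟩ 1 + single ⟨3, by omega⟩ 1
  | ⟨1, _⟩ => p
  | ⟨m + 2, hm⟩ => single ⟨1, by omega⟩ 1 + single ⟨m + 1, by omega⟩ 1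

variable {a h e c : ℕ} {p : Fin (M + 4) →₀ ℕ}

theorem weight_leadExp_eq_weight_trailExp (hp : weight (genArithSeq (M + 4) a h e) p =
      weight (genArithSeq (M + 4) a h e) (single (Fin.last (M + 3)) c)) (t : Fin (M + 4)) :
    weight (genArithSeq (M + 4) a h e) (leadExp h c t) =
      weight (genArithSeq (M + 4) a h e) (trailExp p t) := by
  rcases t with ⟨_ | _ | m, hm⟩
  · simp [leadExp, trailExp, weight_single, genArithSeq]; ring
  · exact hp.symm
  · simp [leadExp, trailExp, weight_single, genArithSeq]; ring

theorem uniqueOfWeight_of_lt_leadExp (hae : a.Coprime e) (he : 0 < e) (hh : 0 < h)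
    (hNa : M + 3 < a) (hc : (M + 3) * (c - 1) < a) (t : Fin (M + 4)) :
    ∀ γ < leadExp h c t, UniqueOfWeight (genArithSeq (M + 4) a h e) γ := by
  rcases t with ⟨_ | _ | m, hm⟩
  · exact uniqueOfWeight_of_lt_single_two hae he hh hNa (by simp [Fin.ext_iff])
  · exact uniqueOfWeight_of_lt_single_last hae he hh (by omega) hc
  · exact uniqueOfWeight_of_lt_single_zero_add_single hae he hh hNa (by simp [Fin.ext_iff])

theorem leadExp_injective (hh : 0 < h) : Function.Injective (leadExp (M := M) h c) := by
  rintro ⟨_ | _ | m, hm⟩ ⟨_ | _ | m', hm'⟩ heq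
  all_goals
    have h0 := DFunLike.congr_fun heq 0
    have h2 := DFunLike.congr_fun heq ⟨2, by omega⟩
    simp [leadExp, single_apply, Fin.ext_iff] at h0 h2 ⊢
  all_goals try omega
  have hm2 := DFunLike.congr_fun heq ⟨m + 2, hm⟩
  simp [leadExp, single_apply, Fin.ext_iff] at hm2
  omega

theorem leadExp_ne_trailExp (hp0 : h < p 0) (t t' : Fin (M + 4)) :
    leadExp h c t ≠ trailExp p t' := by
  intro heq
  have h0 := DFunLike.congr_fun heq 0
  have h1 := DFunLike.congr_fun heq ⟨1, by omega⟩
  rcases t with ⟨_ | _ | m, hm⟩ <;> rcases t' with ⟨_ | _ | m', hm'⟩ <;>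
    simp [leadExp, trailExp, single_apply, Fin.ext_iff] at h0 h1 <;> omega

end Family

theorem card_le_of_span_eq_toricIdeal_genArithSeq {k : Type*} [Field k] {M a h e : ℕ}
    (hae : a.Coprime e) (hh : 0 < h) (he : 0 < e) (hNa : M + 3 < a) {r : ℕ}
    (g : Fin r → MvPolynomial (Fin (M + 4)) k)
    (hg : Ideal.span (Set.range g) = toricIdeal k (genArithSeq (M + 4) a h e)) : M + 4 ≤ r := by
  obtain ⟨c, p, hc, hp, hp0⟩ :=
    exists_weight_eq_weight_single_last (N := M + 3) he (by omega) hNa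
  simpa using card_le_of_binomials (leadExp h c) (trailExp p)
    (weight_leadExp_eq_weight_trailExp hp) (uniqueOfWeight_of_lt_leadExp hae he hh hNa hc)
    (leadExp_injective hh) (leadExp_ne_trailExp hp0) g hg

theorem stmt13_general (k : Type*) [Field k] (n : ℕ) (d : Fin n → ℕ)
    (hn : 4 ≤ n) (hga : IsGenArith d)
    (hgcd : Finset.univ.gcd d = 1) (hmin : MinimallyGenerates d) :
    ¬ IsCI k d := by
  obtain ⟨M, rfl⟩ : ∃ M, n = M + 4 := ⟨n - 4, by omega⟩
  obtain ⟨a, h, e, hh, he, rfl⟩ := hga.exists_eq_genArithSeq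
  rintro ⟨g, hg⟩
  have := card_le_of_span_eq_toricIdeal_genArithSeq (coprime_of_gcd_genArithSeq_eq_one hgcd) hh he
    (lt_of_minimallyGenerates_genArithSeq hmin) g hg
  omega

/-- Let `A = {d₁,…,dₙ}` be a generalized arithmetic sequence of
positive integers with `n ≥ 4`, `gcd(A) = 1`, minimally generating its numerical
semigroup. Then `I_A` is not a complete intersection. -/
theorem stmt13 (k : Type*) [Field k] (n : ℕ) (d : Fin n → ℕ)
    (hn : 4 ≤ n) (hpos : ∀ i, 0 < d i) (hga : IsGenArith d)
    (hgcd : Finset.univ.gcd d = 1) (hmin : MinimallyGenerates d) :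
    ¬ IsCI k d :=
  stmt13_general k n d hn hga hgcd hmin
end

section
/- Let p, q be relatively prime positive integers, {F_n} the (p,q)-Fibonacci sequence, and let h, a, d be positive integers and n ≥ 3. Set d_1 = F_a and d_i = F_{h·a + (i−1)·d} for 2 ≤ i ≤ n. Then d_3 belongs to the semigroup ℕd_1 + ℕd_2 if and only if d is odd or F_{2d} ≥ lcm(d_1, F_d). Moreover, if d_3 ∈ ℕd_1 + ℕd_2, then d_i ∈ ℕd_1 + ℕd_2 for every i with 3 ≤ i ≤ n. -/
open MvPolynomial

/-!
Write `F`, `L` for the `(p,q)`-Fibonacci and Lucas sequences, `A = F a` and `C j = F (h a + j d)`,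
so that `A ∣ C 0` and the semigroup is `ℕA + ℕ C 1`. The identity
`F (m + 2d) = L_d F (m + d) - (-q)^d F m` gives `C (j + 2) = L_d C (j + 1) - (-q)^d C j`; for odd
`d` both coefficients are nonnegative, so every `C j` lies in the semigroup.

For even `d`, `N` lies in the semigroup iff `A ∣ N - β C 1` for some `β` with `β C 1 ≤ N`.
Modulo `A` the shift by `h a` multiplies `F` by a unit, so this divisibility becomes
`lcm (A, F d) ∣ (F (j d) / F d - β) F d`. For `j = 2`, `F (2d) / F d = L_d` and `C 2 < L_d C 1`
force `β < L_d`, hence `lcm (A, F d) ≤ L_d F d = F (2d)`; conversely the bound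
`q^(d/2) C 0 ≤ C 1` leaves room for `β = L_d - k M` with `M = lcm (A, F d) / F d`. For `j ≥ 3`,
`β = (F (j d) / F d) mod M < M ≤ L_d` works since `L_d C 1 ≤ F (2d + 1) C 1 ≤ C 3 ≤ C j`.
-/

theorem mem_closure_pair_iff_exists_dvd {A B N : ℕ} :
    N ∈ AddSubmonoid.closure ({A, B} : Set ℕ) ↔ ∃ β, β * B ≤ N ∧ (A : ℤ) ∣ N - β * B := by
  rw [AddSubmonoid.mem_closure_pair]
  constructor
  · rintro ⟨α, β, rfl⟩
    exact ⟨β, by simp, ⟨α, by push_cast [smul_eq_mul]; ring⟩⟩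
  · rintro ⟨β, hle, hdvd⟩
    rw [← Nat.cast_mul, ← Nat.cast_sub hle, Int.natCast_dvd_natCast] at hdvd
    exact ⟨(N - β * B) / A, β, by rw [smul_eq_mul, smul_eq_mul, Nat.div_mul_cancel hdvd]; omega⟩

theorem exists_mul_mem_Icc {m n x : ℕ} (hm : 0 < m) (hmn : m ≤ n) (hxn : 2 * x ≤ n) :
    ∃ k, k * m ∈ Set.Icc x n := by
  rcases le_or_gt x m with hxm | hmx
  · exact ⟨1, by simpa using ⟨hxm, hmn⟩⟩
  · refine ⟨x / m + 1, by linarith [Nat.lt_mul_div_succ x hm], ?_⟩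
    nlinarith [Nat.div_mul_le_self x m]

section

variable {p q : ℕ}

local notation "F" => pqFib p q
local notation "L" => pqLucas p q

theorem pow_mul_le_of_recurrence {u : ℕ → ℕ} (hu : ∀ n, u (n + 2) = p * u (n + 1) + q * u n)
    (m e : ℕ) : q ^ e * u m ≤ u (m + 2 * e) := by
  induction e with
  | zero => simp
  | succ e ih =>
    calc q ^ (e + 1) * u m = q * (q ^ e * u m) := by ring
      _ ≤ q * u (m + 2 * e) := Nat.mul_le_mul_left q ih
      _ ≤ u (m + 2 * (e + 1)) := by rw [show m + 2 * (e + 1) = m + 2 * e + 2 by ring, hu]; omega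

theorem pqFib_mono (hp : 0 < p) : Monotone F := by
  refine monotone_nat_of_le_succ fun n => ?_
  cases n with
  | zero => simp [pqFib]
  | succ n =>
    show F (n + 1) ≤ p * F (n + 1) + q * F n
    have := Nat.le_mul_of_pos_left (F (n + 1)) hp
    omega

theorem pqFib_pos (hp : 0 < p) {n : ℕ} (hn : 0 < n) : 0 < F n :=
  lt_of_lt_of_le (by simp [pqFib]) (pqFib_mono hp hn)

theorem pqFib_add (m n : ℕ) : F (m + n + 1) = F (m + 1) * F (n + 1) + q * F m * F n := by
  induction n generalizing m with
  | zero => simp [pqFib]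
  | succ n ih =>
    rw [show m + (n + 1) + 1 = m + 1 + n + 1 by ring, ih]
    show (p * F (m + 1) + q * F m) * F (n + 1) + q * F (m + 1) * F n =
      F (m + 1) * (p * F (n + 1) + q * F n) + q * F m * F (n + 1)
    ring

theorem pqFib_mul_le {x : ℕ} (hx : 0 < x) (n : ℕ) : F x * F (n + 1) ≤ F (x + n) := by
  obtain ⟨m, rfl⟩ : ∃ m, x = m + 1 := ⟨x - 1, by omega⟩
  rw [show m + 1 + n = m + n + 1 by ring, pqFib_add]
  exact Nat.le_add_right _ _

theorem pqFib_dvd_pqFib_mul (a k : ℕ) : F a ∣ F (k * a) := by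
  induction k with
  | zero => simp [pqFib]
  | succ k ih =>
    rcases Nat.eq_zero_or_pos a with rfl | ha
    · simp
    obtain ⟨n, rfl⟩ : ∃ n, a = n + 1 := ⟨a - 1, by omega⟩
    rw [show (k + 1) * (n + 1) = k * (n + 1) + n + 1 by ring, pqFib_add]
    exact dvd_add (dvd_mul_left _ _) ((ih.mul_left q).mul_right _)

theorem pqFib_coprime_q (hpq : p.Coprime q) {n : ℕ} (hn : 0 < n) : (F n).Coprime q := by
  obtain ⟨n, rfl⟩ : ∃ m, n = m + 1 := ⟨n - 1, by omega⟩
  induction n with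
  | zero => exact Nat.coprime_one_left q
  | succ n ih =>
    show (p * F (n + 1) + q * F n).Coprime q
    rw [Nat.coprime_add_mul_left_left]
    exact hpq.mul_left (ih n.succ_pos)

theorem pqFib_coprime_succ (hpq : p.Coprime q) (n : ℕ) : (F n).Coprime (F (n + 1)) := by
  induction n with
  | zero => simp [pqFib]
  | succ n ih =>
    show (F (n + 1)).Coprime (p * F (n + 1) + q * F n)
    rw [Nat.coprime_mul_right_add_right]
    exact (pqFib_coprime_q hpq n.succ_pos).mul_right ih.symm

theorem pqLucas_succ (n : ℕ) : L (n + 1) = F (n + 2) + q * F n := by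
  induction n using Nat.twoStepInduction with
  | zero => simp [pqFib, pqLucas]
  | one =>
    show p * p + q * 2 = (p * (p * 1 + q * 0) + q * 1) + q * 1
    ring
  | more n ih1 ih2 =>
    have hF : F (n + 2) = p * F (n + 1) + q * F n := rfl
    show p * L (n + 1 + 1) + q * L (n + 1) = p * F (n + 3) + q * F (n + 2) + q * F (n + 2)
    rw [ih1, ih2]
    nth_rewrite 3 [hF]
    ring

theorem pqFib_two_mul (d : ℕ) : F (2 * d) = F d * L d := by
  cases d with
  | zero => simp [pqFib]
  | succ e =>
    rw [show 2 * (e + 1) = e + 1 + e + 1 by ring, pqFib_add, pqLucas_succ]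
    ring

theorem pqLucas_le (hp : 0 < p) {d : ℕ} (hd : 0 < d) : L d ≤ F (2 * d + 1) := by
  obtain ⟨e, rfl⟩ : ∃ e, d = e + 1 := ⟨d - 1, by omega⟩
  rw [pqLucas_succ, show 2 * (e + 1) + 1 = e + 1 + (e + 1) + 1 by ring, pqFib_add (e + 1)]
  have h1 := Nat.le_mul_self (F (e + 1 + 1))
  have h2 : F e ≤ F (e + 1) * F (e + 1) :=
    (pqFib_mono hp e.le_succ).trans (Nat.le_mul_self _)
  nlinarith

theorem pqFib_docagne (t r : ℕ) :
    (F (t + r) * F (t + 1) : ℤ) - F (t + r + 1) * F t = (-(q : ℤ)) ^ t * F r := by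
  induction t with
  | zero => simp [pqFib]
  | succ t ih =>
    rw [show t + 1 + r + 1 = t + r + 2 by ring, show t + 1 + r = t + r + 1 by ring]
    show (F (t + r + 1) * (p * F (t + 1) + q * F t) : ℤ) -
      (p * F (t + r + 1) + q * F (t + r) : ℕ) * F (t + 1) = _
    push_cast
    linear_combination (-(q : ℤ)) * ih

theorem pqLucas_mul_pqFib (m d : ℕ) :
    (L d * F (m + d) : ℤ) = F (m + 2 * d) + (-(q : ℤ)) ^ d * F m := by
  cases d with
  | zero => simp [pqLucas]; ring
  | succ e =>
    have hA := pqFib_add (p := p) (q := q) (m + e) (e + 1)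
    rw [show m + e + (e + 1) + 1 = m + 2 * (e + 1) by ring] at hA
    have hD := pqFib_docagne (p := p) (q := q) e m
    rw [show e + m = m + e by ring] at hD
    rw [show m + (e + 1) = m + e + 1 by ring, pqLucas_succ, hA]
    push_cast
    linear_combination (-(q : ℤ)) * hD

theorem pqFib_add_two_mul_of_odd {d : ℕ} (hd : Odd d) (m : ℕ) :
    F (m + 2 * d) = L d * F (m + d) + q ^ d * F m := by
  have h := pqLucas_mul_pqFib (p := p) (q := q) m d
  rw [hd.neg_pow] at h
  zify
  linarith

theorem pqFib_add_two_mul_of_even {d : ℕ} (hd : Even d) (m : ℕ) :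
    F (m + 2 * d) + q ^ d * F m = L d * F (m + d) := by
  have h := pqLucas_mul_pqFib (p := p) (q := q) m d
  rw [hd.neg_pow] at h
  zify
  linarith

/-- The shift by `b` multiplies `F` by the unit `q F (b - 1)` modulo any `F a` dividing `F b`. -/
theorem dvd_pqFib_add_sub_iff (hpq : p.Coprime q) {a b : ℕ} (ha : 0 < a) (hb : 0 < b)
    (hab : F a ∣ F b) (m n β : ℕ) :
    (F a : ℤ) ∣ F (b + m) - β * F (b + n) ↔ (F a : ℤ) ∣ F m - β * F n := by
  obtain ⟨c, rfl⟩ : ∃ c, b = c + 1 := ⟨b - 1, by omega⟩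
  have hcop : IsCoprime (F a : ℤ) (q * F c : ℕ) := Nat.isCoprime_iff_coprime.mpr
    ((pqFib_coprime_q hpq ha).mul_right
      ((pqFib_coprime_succ hpq c).symm.coprime_dvd_left hab))
  have hsplit : (F (c + 1 + m) : ℤ) - β * F (c + 1 + n) =
      F (c + 1) * (F (m + 1) - β * F (n + 1)) + (q * F c : ℕ) * (F m - β * F n) := by
    rw [show c + 1 + m = c + m + 1 by ring, show c + 1 + n = c + n + 1 by ring, pqFib_add,
      pqFib_add]
    push_cast
    ring
  rw [hsplit, dvd_add_right (dvd_mul_of_dvd_left (Int.natCast_dvd_natCast.mpr hab) _)]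
  exact ⟨hcop.dvd_of_dvd_mul_left, fun h => h.mul_left _⟩

theorem exists_lcm_pqFib_eq_mul_le_pqLucas (hp : 0 < p) {a d : ℕ} (ha : 0 < a) (hd : 0 < d)
    (hle : Nat.lcm (F a) (F d) ≤ F (2 * d)) :
    ∃ M, 0 < M ∧ M ≤ L d ∧ Nat.lcm (F a) (F d) = M * F d := by
  have hFd := pqFib_pos (q := q) hp hd
  obtain ⟨M, hM⟩ := Nat.dvd_lcm_right (F a) (F d)
  rw [mul_comm] at hM
  refine ⟨M, Nat.pos_of_ne_zero ?_, ?_, hM⟩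
  · rintro rfl
    exact Nat.lcm_ne_zero (pqFib_pos hp ha).ne' hFd.ne' (by simpa using hM)
  · rw [hM, pqFib_two_mul, mul_comm (F d)] at hle
    exact Nat.le_of_mul_le_mul_right hle hFd

theorem pqFib_add_mul_mem_closure_of_odd {a b d : ℕ} (hd : Odd d) (hab : F a ∣ F b) (j : ℕ) :
    F (b + j * d) ∈ AddSubmonoid.closure ({F a, F (b + d)} : Set ℕ) := by
  induction j using Nat.twoStepInduction with
  | zero =>
    obtain ⟨c, hc⟩ := hab
    rw [zero_mul, add_zero, hc, mul_comm, ← smul_eq_mul]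
    exact nsmul_mem (AddSubmonoid.subset_closure (by simp)) c
  | one => exact AddSubmonoid.subset_closure (by simp)
  | more j ih0 ih1 =>
    rw [show b + (j + 2) * d = b + j * d + 2 * d by ring, pqFib_add_two_mul_of_odd hd,
      show b + j * d + d = b + (j + 1) * d by ring, ← smul_eq_mul, ← smul_eq_mul]
    exact add_mem (nsmul_mem ih1 _) (nsmul_mem ih0 _)

theorem pqFib_add_two_mul_mem_closure_iff (hp : 0 < p) (hq : 0 < q) (hpq : p.Coprime q)
    {a b d : ℕ} (ha : 0 < a) (hb : 0 < b) (hab : F a ∣ F b) (hd : 0 < d) (hev : Even d) :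
    F (b + 2 * d) ∈ AddSubmonoid.closure ({F a, F (b + d)} : Set ℕ) ↔
      Nat.lcm (F a) (F d) ≤ F (2 * d) := by
  have hrec := pqFib_add_two_mul_of_even (p := p) (q := q) hev b
  have hmod : ∀ β : ℕ, (F a : ℤ) ∣ F (b + 2 * d) - β * F (b + d) ↔
      (F a : ℤ) ∣ (L d - β) * F d := fun β => by
    rw [dvd_pqFib_add_sub_iff hpq ha hb hab, pqFib_two_mul]
    push_cast
    ring_nf
  rw [mem_closure_pair_iff_exists_dvd]
  constructor
  · rintro ⟨β, hle, hdvd⟩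
    have hβ : β < L d := by
      by_contra! hβ
      have := Nat.mul_le_mul_right (F (b + d)) hβ
      have : 0 < q ^ d * F b := Nat.mul_pos (pow_pos hq d) (pqFib_pos hp hb)
      omega
    rw [hmod, ← Nat.cast_sub hβ.le, ← Nat.cast_mul, Int.natCast_dvd_natCast] at hdvd
    calc Nat.lcm (F a) (F d) ≤ (L d - β) * F d :=
          Nat.le_of_dvd (Nat.mul_pos (by omega) (pqFib_pos hp hd))
            (Nat.lcm_dvd hdvd (dvd_mul_left _ _))
      _ ≤ L d * F d := Nat.mul_le_mul_right _ (Nat.sub_le _ _)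
      _ = F (2 * d) := by rw [pqFib_two_mul, mul_comm]
  · intro hle
    obtain ⟨M, hM, hML, hlcm⟩ := exists_lcm_pqFib_eq_mul_le_pqLucas hp ha hd hle
    obtain ⟨e, rfl⟩ := hev.two_dvd
    have hL : 2 * q ^ e ≤ L (2 * e) := by
      simpa [mul_comm, pqLucas] using pow_mul_le_of_recurrence (u := L) (fun _ => rfl) 0 e
    have hB : q ^ e * F b ≤ F (b + 2 * e) := pow_mul_le_of_recurrence (fun _ => rfl) b e
    obtain ⟨k, hk, hkL⟩ := exists_mul_mem_Icc hM hML hL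
    refine ⟨L (2 * e) - k * M, ?_, ?_⟩
    · have : q ^ (2 * e) * F b ≤ k * M * F (b + 2 * e) :=
        calc q ^ (2 * e) * F b = q ^ e * (q ^ e * F b) := by ring
          _ ≤ k * M * F (b + 2 * e) := Nat.mul_le_mul hk hB
      rw [Nat.sub_mul]
      omega
    · have hkM : ((L (2 * e) : ℤ) - (L (2 * e) - k * M : ℕ)) * F (2 * e) =
          k * (Nat.lcm (F a) (F (2 * e)) : ℕ) := by
        rw [hlcm, Nat.cast_sub hkL]
        push_cast
        ring
      rw [hmod, hkM]
      exact (Int.natCast_dvd_natCast.mpr (Nat.dvd_lcm_left _ _)).mul_left _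

theorem pqFib_add_mul_mem_closure_of_lcm_le (hp : 0 < p) (hpq : p.Coprime q)
    {a b d : ℕ} (ha : 0 < a) (hb : 0 < b) (hab : F a ∣ F b) (hd : 0 < d)
    (hle : Nat.lcm (F a) (F d) ≤ F (2 * d)) {j : ℕ} (hj : 3 ≤ j) :
    F (b + j * d) ∈ AddSubmonoid.closure ({F a, F (b + d)} : Set ℕ) := by
  obtain ⟨M, hM, hML, hlcm⟩ := exists_lcm_pqFib_eq_mul_le_pqLucas hp ha hd hle
  obtain ⟨c, hc⟩ := pqFib_dvd_pqFib_mul (p := p) (q := q) d j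
  rw [mem_closure_pair_iff_exists_dvd]
  refine ⟨c % M, ?_, ?_⟩
  · calc c % M * F (b + d) ≤ L d * F (b + d) :=
          Nat.mul_le_mul_right _ ((Nat.mod_lt c hM).le.trans hML)
      _ ≤ F (2 * d + 1) * F (b + d) := Nat.mul_le_mul_right _ (pqLucas_le hp hd)
      _ ≤ F (b + d + 2 * d) := by rw [mul_comm]; exact pqFib_mul_le (by omega) _
      _ ≤ F (b + j * d) := pqFib_mono hp (by nlinarith)
  · have hcM : ((F (j * d) : ℕ) : ℤ) - (c % M : ℕ) * F d =
        (c / M : ℕ) * (Nat.lcm (F a) (F d) : ℕ) := by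
      have hsplit : (c : ℤ) = (c % M : ℕ) + M * (c / M : ℕ) := by
        exact_mod_cast (Nat.mod_add_div c M).symm
      rw [hlcm, hc]
      simp only [Nat.cast_mul]
      linear_combination (F d : ℤ) * hsplit
    rw [dvd_pqFib_add_sub_iff hpq ha hb hab, hcM]
    exact (Int.natCast_dvd_natCast.mpr (Nat.dvd_lcm_left _ _)).mul_left _

end

theorem stmt14_general (p q : ℕ) (hp : 0 < p) (hq : 0 < q) (hpq : Nat.gcd p q = 1)
    (h a d : ℕ) (hh : 0 < h) (ha : 0 < a) (hd : 0 < d) (n : ℕ)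
    (D : ℕ → ℕ) (hD1 : D 1 = pqFib p q a)
    (hDi : ∀ i, 2 ≤ i → D i = pqFib p q (h * a + (i - 1) * d)) :
    ((∃ α β : ℕ, D 3 = α * D 1 + β * D 2) ↔
        (Odd d ∨ Nat.lcm (D 1) (pqFib p q d) ≤ pqFib p q (2 * d))) ∧
      ((∃ α β : ℕ, D 3 = α * D 1 + β * D 2) →
        ∀ i, 3 ≤ i → i ≤ n → ∃ α β : ℕ, D i = α * D 1 + β * D 2) := by
  have hb : 0 < h * a := Nat.mul_pos hh ha
  have hab := pqFib_dvd_pqFib_mul (p := p) (q := q) a h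
  have hmem : ∀ i, 2 ≤ i → ((∃ α β : ℕ, D i = α * D 1 + β * D 2) ↔
      pqFib p q (h * a + (i - 1) * d) ∈
        AddSubmonoid.closure ({pqFib p q a, pqFib p q (h * a + d)} : Set ℕ)) := fun i hi => by
    simp [AddSubmonoid.mem_closure_pair, hDi i hi, hD1, hDi 2 le_rfl, eq_comm]
  have hC2 : pqFib p q (h * a + 2 * d) ∈
      AddSubmonoid.closure ({pqFib p q a, pqFib p q (h * a + d)} : Set ℕ) ↔
        Odd d ∨ Nat.lcm (D 1) (pqFib p q d) ≤ pqFib p q (2 * d) := by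
    rw [hD1]
    rcases Nat.even_or_odd d with hev | hodd
    · simp [pqFib_add_two_mul_mem_closure_iff hp hq hpq ha hb hab hd hev,
        Nat.not_odd_iff_even.mpr hev]
    · exact iff_of_true (pqFib_add_mul_mem_closure_of_odd hodd hab 2) (Or.inl hodd)
  rw [hmem 3 (by norm_num), show 3 - 1 = 2 from rfl, hC2]
  refine ⟨Iff.rfl, fun hcond i hi _ => (hmem i (by omega)).2 ?_⟩
  rcases hcond with hodd | hle
  · exact pqFib_add_mul_mem_closure_of_odd hodd hab _
  · rcases hi.eq_or_lt with rfl | hi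
    · exact hC2.2 (Or.inr hle)
    · exact pqFib_add_mul_mem_closure_of_lcm_le hp hpq ha hb hab hd (hD1 ▸ hle) (by omega)

/-- With `d₁ = F_a`, `d_i = F_{h·a + (i−1)·d}` for `i ≥ 2` in the
`(p,q)`-Fibonacci sequence, `d₃ ∈ ℕd₁ + ℕd₂` iff `d` is odd or
`F_{2d} ≥ lcm(d₁, F_d)`; moreover, if `d₃ ∈ ℕd₁ + ℕd₂`, then `d_i ∈ ℕd₁ + ℕd₂`
for every `3 ≤ i ≤ n`. -/
theorem stmt14 (p q : ℕ) (hp : 0 < p) (hq : 0 < q) (hpq : Nat.gcd p q = 1)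
    (h a d : ℕ) (hh : 0 < h) (ha : 0 < a) (hd : 0 < d) (n : ℕ) (hn : 3 ≤ n)
    (D : ℕ → ℕ) (hD1 : D 1 = pqFib p q a)
    (hDi : ∀ i, 2 ≤ i → D i = pqFib p q (h * a + (i - 1) * d)) :
    ((∃ α β : ℕ, D 3 = α * D 1 + β * D 2) ↔
        (Odd d ∨ Nat.lcm (D 1) (pqFib p q d) ≤ pqFib p q (2 * d))) ∧
      ((∃ α β : ℕ, D 3 = α * D 1 + β * D 2) →
        ∀ i, 3 ≤ i → i ≤ n → ∃ α β : ℕ, D i = α * D 1 + β * D 2) :=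
  stmt14_general p q hp hq hpq h a d hh ha hd n D hD1 hDi
end
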